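/- Let z ∈ ℝⁿ take values in [M₀, M₁] with M = M₁ - M₀, mean z̄, and empirical variance s². If n ≥ 2ρM²/s² (equivalently s² ≥ 2ρM²/n), then sup{⟨p, z⟩ : p a probability vector, (1/2)‖np - 1‖₂² ≤ ρ} = z̄ + √(2ρ s²/n). -/

import Mathlib

open Finset Real

/-- The robust supremum `sup {⟨p, z⟩ : p a probability vector, (1/2)‖np - 1‖₂² ≤ ρ}`. -/
noncomputable def robustSup (n : ℕ) (ρ : ℝ) (z : Fin n → ℝ) : ℝ :=
  sSup {r : ℝ | ∃ p : Fin n → ℝ, (∀ i, 0 ≤ p i) ∧ (∑ i, p i) = 1 ∧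
    (1 / 2) * (∑ i, ((n : ℝ) * p i - 1) ^ 2) ≤ ρ ∧ r = ∑ i, p i * z i}

/-- The empirical mean of `z`. -/
noncomputable def empMean (n : ℕ) (z : Fin n → ℝ) : ℝ := (1 / n) * ∑ i, z i

/-- The empirical variance of `z`. -/
noncomputable def empVar (n : ℕ) (z : Fin n → ℝ) : ℝ :=
  (1 / n) * ∑ i, (z i - empMean n z) ^ 2

/-!
Writing `z̄` for the mean and `v` for the variance, every probability vector `p` satisfies
`n (⟨p, z⟩ - z̄) = ∑ (n pᵢ - 1)(zᵢ - z̄)`, so Cauchy–Schwarz and the χ² constraint give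
`⟨p, z⟩ ≤ z̄ + √(2ρ v / n)`. Equality in Cauchy–Schwarz is reached by the tilted weights
`pᵢ = (1 + t (zᵢ - z̄)) / n` with `t = √(2ρ / (n v))`; they are nonnegative because
`t |zᵢ - z̄| ≤ t (M₁ - M₀) ≤ 1`, which is exactly the variance hypothesis.
-/

theorem sqrt_div_mul_self {c v : ℝ} (hc : 0 ≤ c) (hv : 0 ≤ v) : √(c / v) * v = √(c * v) := by
  rw [sqrt_div' _ hv, div_mul_eq_mul_div, mul_div_assoc, div_sqrt, sqrt_mul hc]

section Empirical

variable {n : ℕ} (z : Fin n → ℝ)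

theorem sum_sub_empMean : ∑ i, (z i - empMean n z) = 0 := by
  rcases n.eq_zero_or_pos with rfl | hn
  · simp
  · rw [sum_sub_distrib, sum_const, card_univ, Fintype.card_fin, nsmul_eq_mul, empMean]
    field_simp
    ring

theorem sum_sub_empMean_sq : ∑ i, (z i - empMean n z) ^ 2 = n * empVar n z := by
  rcases n.eq_zero_or_pos with rfl | hn
  · simp
  · rw [empVar]
    field_simp

theorem empVar_nonneg : 0 ≤ empVar n z := by
  unfold empVar
  positivity

theorem empMean_mem_Icc {M₀ M₁ : ℝ} (hn : 0 < n) (hz : ∀ i, z i ∈ Set.Icc M₀ M₁) :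
    empMean n z ∈ Set.Icc M₀ M₁ := by
  have hn' : (0 : ℝ) < n := Nat.cast_pos.2 hn
  have hlo := card_nsmul_le_sum univ z M₀ fun i _ ↦ (hz i).1
  have hhi := sum_le_card_nsmul univ z M₁ fun i _ ↦ (hz i).2
  simp only [card_univ, Fintype.card_fin, nsmul_eq_mul] at hlo hhi
  rw [empMean, one_div_mul_eq_div]
  exact ⟨(le_div_iff₀' hn').2 hlo, (div_le_iff₀' hn').2 hhi⟩

theorem abs_sub_empMean_le {M₀ M₁ : ℝ} (hz : ∀ i, z i ∈ Set.Icc M₀ M₁) (i : Fin n) :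
    |z i - empMean n z| ≤ M₁ - M₀ := by
  obtain ⟨hlo, hhi⟩ := empMean_mem_Icc z i.pos hz
  rw [abs_sub_le_iff]
  constructor <;> linarith [(hz i).1, (hz i).2]

theorem sum_mul_sub_one_mul_sub_empMean {p : Fin n → ℝ} (hp : ∑ i, p i = 1) :
    ∑ i, ((n : ℝ) * p i - 1) * (z i - empMean n z) = n * (∑ i, p i * z i - empMean n z) := by
  have hz := sum_sub_empMean z
  calc ∑ i, ((n : ℝ) * p i - 1) * (z i - empMean n z)
      = n * (∑ i, p i * z i) - n * empMean n z * ∑ i, p i - ∑ i, (z i - empMean n z) := by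
        simp only [mul_sum, ← sum_sub_distrib]
        exact sum_congr rfl fun i _ ↦ by ring
    _ = n * (∑ i, p i * z i - empMean n z) := by rw [hp, hz]; ring

theorem sum_mul_le_empMean_add_sqrt {ρ : ℝ} {p : Fin n → ℝ} (hp : ∑ i, p i = 1)
    (hpρ : (1 / 2) * (∑ i, ((n : ℝ) * p i - 1) ^ 2) ≤ ρ) :
    ∑ i, p i * z i ≤ empMean n z + √(2 * ρ * empVar n z / n) := by
  have hn : (0 : ℝ) < n := by
    rcases n.eq_zero_or_pos with rfl | hn
    · simp at hp
    · exact Nat.cast_pos.2 hn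
  have hcs := sum_mul_le_sqrt_mul_sqrt univ (fun i ↦ (n : ℝ) * p i - 1) (fun i ↦ z i - empMean n z)
  rw [sum_mul_sub_one_mul_sub_empMean z hp, sum_sub_empMean_sq, ← sqrt_mul (by positivity)] at hcs
  have hχ : ∑ i, ((n : ℝ) * p i - 1) ^ 2 ≤ 2 * ρ := by linarith
  have hnv : 0 ≤ n * empVar n z := mul_nonneg hn.le (empVar_nonneg z)
  have hscale : 2 * ρ * (n * empVar n z) = n ^ 2 * (2 * ρ * empVar n z / n) := by field_simp
  have key : n * (∑ i, p i * z i - empMean n z) ≤ n * √(2 * ρ * empVar n z / n) :=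
    calc _ ≤ √((∑ i, ((n : ℝ) * p i - 1) ^ 2) * (n * empVar n z)) := hcs
      _ ≤ √(2 * ρ * (n * empVar n z)) := by gcongr
      _ = n * √(2 * ρ * empVar n z / n) := by rw [hscale, sqrt_mul (sq_nonneg _), sqrt_sq hn.le]
  linarith [le_of_mul_le_mul_left key hn]

noncomputable def tiltedWeights (t : ℝ) (i : Fin n) : ℝ :=
  (1 + t * (z i - empMean n z)) / n

theorem tiltedWeights_nonneg {t M : ℝ} (ht : 0 ≤ t) (htM : t * M ≤ 1)
    (hz : ∀ i, |z i - empMean n z| ≤ M) (i : Fin n) : 0 ≤ tiltedWeights z t i := by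
  have hdev : -(t * (z i - empMean n z)) ≤ t * M :=
    calc -(t * (z i - empMean n z)) ≤ |t * (z i - empMean n z)| := neg_le_abs _
      _ = t * |z i - empMean n z| := by rw [abs_mul, abs_of_nonneg ht]
      _ ≤ t * M := mul_le_mul_of_nonneg_left (hz i) ht
  exact div_nonneg (by linarith) n.cast_nonneg

theorem sum_tiltedWeights (hn : n ≠ 0) (t : ℝ) : ∑ i, tiltedWeights z t i = 1 := by
  simp only [tiltedWeights, ← sum_div, sum_add_distrib, ← mul_sum, sum_sub_empMean]
  simp [hn]

theorem mul_tiltedWeights_sub_one (hn : n ≠ 0) (t : ℝ) (i : Fin n) :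
    n * tiltedWeights z t i - 1 = t * (z i - empMean n z) := by
  unfold tiltedWeights
  field_simp
  ring

theorem sum_mul_tiltedWeights_sub_one_sq (hn : n ≠ 0) (t : ℝ) :
    ∑ i, ((n : ℝ) * tiltedWeights z t i - 1) ^ 2 = t ^ 2 * (n * empVar n z) := by
  simp_rw [mul_tiltedWeights_sub_one z hn, mul_pow, ← mul_sum, sum_sub_empMean_sq]

theorem sum_tiltedWeights_mul (hn : n ≠ 0) (t : ℝ) :
    ∑ i, tiltedWeights z t i * z i = empMean n z + t * empVar n z := by
  have h := sum_mul_sub_one_mul_sub_empMean z (sum_tiltedWeights z hn t)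
  simp_rw [mul_tiltedWeights_sub_one z hn, mul_assoc, ← mul_sum, ← sq, sum_sub_empMean_sq] at h
  have hn' : (n : ℝ) ≠ 0 := Nat.cast_ne_zero.2 hn
  have hscaled : n * (∑ i, tiltedWeights z t i * z i - empMean n z) = n * (t * empVar n z) := by
    rw [← h]
    ring
  linarith [mul_left_cancel₀ hn' hscaled]

end Empirical

theorem robustSup_eq_of_bounded_and_enough_variance (n : ℕ) (hn : 0 < n)
    (ρ : ℝ) (hρ : 0 ≤ ρ) (M₀ M₁ : ℝ) (z : Fin n → ℝ)
    (hz : ∀ i, z i ∈ Set.Icc M₀ M₁)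
    (hvar : empVar n z ≥ 2 * ρ * (M₁ - M₀) ^ 2 / n) :
    robustSup n ρ z = empMean n z + Real.sqrt (2 * ρ * empVar n z / n) := by
  set v := empVar n z
  have hv : 0 ≤ v := empVar_nonneg z
  have hc : 0 ≤ 2 * ρ / n := by positivity
  -- For `v = 0` this is `√(c / 0) = 0`, i.e. the uniform weights.
  set t := √(2 * ρ / n / v) with ht
  have htM : t * (M₁ - M₀) ≤ 1 := by
    calc t * (M₁ - M₀) ≤ t * |M₁ - M₀| := mul_le_mul_of_nonneg_left (le_abs_self _) (sqrt_nonneg _)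
      _ = √(2 * ρ / n * (M₁ - M₀) ^ 2 / v) := by
        rw [← sqrt_sq_eq_abs, ← sqrt_mul (by positivity), div_mul_eq_mul_div]
      _ ≤ 1 := sqrt_le_one.2 (div_le_one_of_le₀ (by rw [div_mul_eq_mul_div]; linarith) hv)
  have hχ : (1 / 2) * (t ^ 2 * (n * v)) ≤ ρ := by
    rw [sq_sqrt (div_nonneg hc hv)]
    rcases hv.eq_or_lt with hv0 | hvpos
    · simp [← hv0, hρ]
    · exact le_of_eq (by field_simp)
  refine IsGreatest.csSup_eq ⟨⟨tiltedWeights z t, tiltedWeights_nonneg z (sqrt_nonneg _) htM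
    (abs_sub_empMean_le z hz), sum_tiltedWeights z hn.ne' t, ?_, ?_⟩, ?_⟩
  · rwa [sum_mul_tiltedWeights_sub_one_sq z hn.ne']
  · rw [sum_tiltedWeights_mul z hn.ne', ht, sqrt_div_mul_self hc hv, div_mul_eq_mul_div]
  · rintro r ⟨p, -, hp, hpρ, rfl⟩
    exact sum_mul_le_empMean_add_sqrt z hp hpρ
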